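/- Let p ∈ [1,∞] and let f : ℝ → ℝ be a 1-periodic measurable function with f ∈ L^p(0,1), such that for some 0 < a < b < 1 one has f(x) ≤ 0 for almost every x ∈ [a,b] and f(x) ≥ 0 for almost every x ∈ [0,1]∖[a,b]. Define F(x) = ∫₀¹ 𝒢′(x−y) f(y) dy. Then F(b) ≥ F(a); moreover F(b) = F(a) holds only when f(x) = 0 for almost every x. -/

import Mathlib

/-!
Write `F b - F a = ∫₀¹ w f` with `w y = 𝒢′(b - y) - 𝒢′(a - y)`. Since `𝒢′` is a strictly increasing
function of the fractional part of its argument, `w < 0` on `(a, b)` and `w > 0` on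
`(0, 1) ∖ [a, b]`: `w` has the sign pattern of `f`. So `w f ≥ 0`, and `∫ w f = 0` forces `w f = 0`,
hence `f = 0`, a.e. on `(0, 1)`, and then a.e. on `ℝ` by periodicity.
-/

open MeasureTheory Real
open scoped ENNReal NNReal

/-- The 1-periodic kernel `𝒢′(x) = sinh(x - ⌊x⌋ - 1/2)/(2 sinh(1/2))`, the derivative of the
periodic Green's function of `1 - d²/dx²` on the circle `ℝ/ℤ`. -/
noncomputable def bbmGper' (x : ℝ) : ℝ :=
  Real.sinh (x - ↑⌊x⌋ - 1 / 2) / (2 * Real.sinh (1 / 2))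

open Set

theorem Function.Periodic.ae_of_ae_restrict_Ioc {α : Type*} {f : ℝ → α} {T : ℝ}
    (hf : Function.Periodic f T) (hT : 0 < T) {p : α → Prop} {t : ℝ}
    (h : ∀ᵐ x ∂volume.restrict (Ioc t (t + T)), p (f x)) : ∀ᵐ x, p (f x) := by
  rw [ae_iff, Measure.restrict_apply' measurableSet_Ioc] at h
  rw [ae_iff]
  refine (isAddFundamentalDomain_Ioc hT t).measure_zero_of_invariant _ (fun g => ?_) h
  obtain ⟨n, hn⟩ := g.2
  ext x
  rw [mem_vadd_set_iff_neg_vadd_mem, AddSubgroup.vadd_def, vadd_eq_add, mem_ofPred_eq,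
    mem_ofPred_eq, AddSubgroup.coe_neg, ← hn, neg_add_eq_sub, (hf.zsmul n).sub_eq]

theorem ae_eq_zero_of_integral_mul_eq_zero {α : Type*} [MeasurableSpace α] {μ : Measure α}
    {w f : α → ℝ} (hwf : Integrable (fun x => w x * f x) μ)
    (hnonneg : ∀ᵐ x ∂μ, 0 ≤ w x * f x) (hw : ∀ᵐ x ∂μ, w x ≠ 0)
    (h : ∫ x, w x * f x ∂μ = 0) : f =ᵐ[μ] 0 := by
  have hzero := (integral_eq_zero_iff_of_nonneg_ae hnonneg hwf).mp h
  filter_upwards [hzero, hw] with x hx hwx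
  exact (mul_eq_zero.mp hx).resolve_left hwx

lemma bbmGper'_eq_fract (x : ℝ) :
    bbmGper' x = sinh (Int.fract x - 1 / 2) / (2 * sinh (1 / 2)) := by
  rw [bbmGper', Int.self_sub_floor]

lemma measurable_bbmGper' : Measurable bbmGper' := by
  simp_rw [funext bbmGper'_eq_fract]
  exact (measurable_sinh.comp (measurable_fract.sub_const _)).div_const _

lemma abs_bbmGper'_le (x : ℝ) : |bbmGper' x| ≤ 1 / 2 := by
  have hs : 0 < sinh (1 / 2) := sinh_pos_iff.mpr (by norm_num)
  have hfract : |Int.fract x - 1 / 2| ≤ 1 / 2 :=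
    abs_le.mpr ⟨by linarith [Int.fract_nonneg x], by linarith [Int.fract_lt_one x]⟩
  have hden : 0 < 2 * sinh (1 / 2) := mul_pos two_pos hs
  rw [bbmGper'_eq_fract, abs_div, abs_of_pos hden, div_le_iff₀ hden, abs_sinh]
  linarith [sinh_le_sinh.mpr hfract]

lemma bbmGper'_lt_bbmGper'_iff {x y : ℝ} :
    bbmGper' x < bbmGper' y ↔ Int.fract x < Int.fract y := by
  have hs : 0 < sinh (1 / 2) := sinh_pos_iff.mpr (by norm_num)
  rw [bbmGper'_eq_fract, bbmGper'_eq_fract, div_lt_div_iff_of_pos_right (by positivity),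
    sinh_lt_sinh, sub_lt_sub_iff_right]

lemma bbmGper'_lt_of_floor_eq {x y : ℝ} (hxy : x < y) (h : ⌊x⌋ = ⌊y⌋) :
    bbmGper' x < bbmGper' y := by
  rw [bbmGper'_lt_bbmGper'_iff, ← Int.self_sub_floor, ← Int.self_sub_floor, h]
  linarith

lemma bbmGper'_lt_of_floor_lt {x y : ℝ} (hyx : y < x + 1) (h : ⌊x⌋ < ⌊y⌋) :
    bbmGper' y < bbmGper' x := by
  have : (⌊x⌋ : ℝ) + 1 ≤ ⌊y⌋ := by exact_mod_cast h
  rw [bbmGper'_lt_bbmGper'_iff, ← Int.self_sub_floor, ← Int.self_sub_floor]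
  linarith

lemma MeasureTheory.Integrable.bbmGper'_sub_mul {f : ℝ → ℝ} {μ : Measure ℝ} (hf : Integrable f μ) (c : ℝ) :
    Integrable (fun y => bbmGper' (c - y) * f y) μ :=
  hf.bdd_mul (measurable_bbmGper'.comp (measurable_const_sub c)).aestronglyMeasurable
    (ae_of_all _ fun y => abs_bbmGper'_le (c - y))

section

variable {a b y : ℝ}

lemma bbmGper'_sub_lt_of_mem_Ioo (h0a : 0 < a) (hb1 : b < 1) (hy : y ∈ Ioo a b) :
    bbmGper' (b - y) < bbmGper' (a - y) := by
  refine bbmGper'_lt_of_floor_lt (by linarith) ?_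
  have h1 : ⌊a - y⌋ < 0 := Int.floor_lt.mpr (by push_cast; linarith [hy.1])
  have h2 : 0 ≤ ⌊b - y⌋ := Int.floor_nonneg.mpr (by linarith [hy.2])
  omega

lemma bbmGper'_sub_lt_of_notMem_Icc (h0a : 0 < a) (hab : a < b) (hb1 : b < 1)
    (hy : y ∈ Ioo 0 1) (hyab : y ∉ Icc a b) :
    bbmGper' (a - y) < bbmGper' (b - y) := by
  obtain ⟨hy0, hy1⟩ := hy
  refine bbmGper'_lt_of_floor_eq (by linarith) ?_
  rcases not_and_or.mp hyab with hya | hyb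
  · rw [not_le] at hya
    rw [Int.floor_eq_zero_iff.mpr ⟨by linarith, by linarith⟩,
      Int.floor_eq_zero_iff.mpr ⟨by linarith, by linarith⟩]
  · rw [not_le] at hyb
    rw [(Int.floor_eq_iff (z := -1)).mpr ⟨by push_cast; linarith, by push_cast; linarith⟩,
      (Int.floor_eq_iff (z := -1)).mpr ⟨by push_cast; linarith, by push_cast; linarith⟩]

end

/-- Periodic version: if `f` is `1`-periodic, `f ∈ L^p(0,1)`, `f ≤ 0` a.e. on `[a,b]` and
`f ≥ 0` a.e. on `[0,1] ∖ [a,b]`, then `F(x) = ∫₀¹ 𝒢′(x-y) f(y) dy` satisfies `F(b) ≥ F(a)`,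
with equality only if `f = 0` a.e. -/
theorem bbm_key_lemma_circle (p : ℝ≥0∞) (hp : 1 ≤ p) (f : ℝ → ℝ)
    (hper : Function.Periodic f 1)
    (hf : MemLp f p (volume.restrict (Set.Ioo (0:ℝ) 1)))
    (a b : ℝ) (h0a : 0 < a) (hab : a < b) (hb1 : b < 1)
    (hneg : ∀ᵐ x ∂(volume.restrict (Set.Ioo (0:ℝ) 1)), x ∈ Set.Icc a b → f x ≤ 0)
    (hpos : ∀ᵐ x ∂(volume.restrict (Set.Ioo (0:ℝ) 1)), x ∉ Set.Icc a b → 0 ≤ f x) :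
    (∫ y in (0:ℝ)..1, bbmGper' (a - y) * f y) ≤ (∫ y in (0:ℝ)..1, bbmGper' (b - y) * f y) ∧
    ((∫ y in (0:ℝ)..1, bbmGper' (b - y) * f y) = (∫ y in (0:ℝ)..1, bbmGper' (a - y) * f y) →
      ∀ᵐ x : ℝ, f x = 0) := by
  set μ := volume.restrict (Ioo (0:ℝ) 1)
  let w y := bbmGper' (b - y) - bbmGper' (a - y)
  have hint := (hf.integrable hp).bbmGper'_sub_mul
  have hdiff : (∫ y in (0:ℝ)..1, bbmGper' (b - y) * f y) -
      (∫ y in (0:ℝ)..1, bbmGper' (a - y) * f y) = ∫ y, w y * f y ∂μ := by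
    simp_rw [intervalIntegral.integral_of_le zero_le_one, integral_Ioc_eq_integral_Ioo, w, sub_mul]
    exact (integral_sub (hint b) (hint a)).symm
  have hsign : ∀ᵐ y ∂μ, 0 ≤ w y * f y ∧ w y ≠ 0 := by
    have hIoo : ∀ᵐ y ∂μ, y ∈ Ioo a b ↔ y ∈ Icc a b :=
      ae_restrict_of_ae Ioo_ae_eq_Icc.mem_iff
    filter_upwards [ae_restrict_mem measurableSet_Ioo, hIoo, hneg, hpos]
      with y hy hyab hyneg hypos
    by_cases hy' : y ∈ Icc a b
    · have hw := sub_neg.mpr (bbmGper'_sub_lt_of_mem_Ioo h0a hb1 (hyab.mpr hy'))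
      exact ⟨mul_nonneg_of_nonpos_of_nonpos hw.le (hyneg hy'), hw.ne⟩
    · have hw := sub_pos.mpr (bbmGper'_sub_lt_of_notMem_Icc h0a hab hb1 hy hy')
      exact ⟨mul_nonneg hw.le (hypos hy'), hw.ne'⟩
  have hnonneg : ∀ᵐ y ∂μ, 0 ≤ w y * f y := hsign.mono fun _ => And.left
  refine ⟨sub_nonneg.mp (hdiff ▸ integral_nonneg_of_ae hnonneg), fun heq => ?_⟩
  have hzero : f =ᵐ[μ] 0 := ae_eq_zero_of_integral_mul_eq_zero
    (by simpa only [w, sub_mul, Pi.sub_def] using (hint b).sub (hint a))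
    hnonneg (hsign.mono fun _ => And.right) (by rw [← hdiff, heq, sub_self])
  refine hper.ae_of_ae_restrict_Ioc one_pos (p := (· = 0)) (t := 0) ?_
  rw [zero_add, ← Measure.restrict_congr_set Ioo_ae_eq_Ioc]
  exact hzero
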